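/- Let Z ~ Beta(r, n-r+1) with positive integers 1 < r ≤ n. Then E[(log(-log(1-Z)))²] = (1/B(r, n-r+1)) · Σ_{j=0}^{r-1} C(r-1, j) (-1)^j · (1/(n-r+1+j)) · (π²/6 + (C + log(n-r+1+j))²). -/

import Mathlib

/-!
Substituting `z = 1 - exp (-t)` and expanding `(1 - exp (-t)) ^ (r - 1)` binomially reduces the
integral to `∫₀^∞ log² t · exp (-a t) dt = (π²/6 + (γ + log a)²) / a`, and after rescaling `t`
to `∫₀^∞ log^k t · exp (-t) dt = Γ⁽ᵏ⁾(1)` for `k ≤ 2` (differentiate the Mellin transform of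
`exp (-t)`). Finally `Γ''(1) = Γ(1) (ψ(1)² + ψ'(1)) = γ² + ζ(2)`, where `ψ'(1) = ζ(2)` comes
from differentiating the series `ψ x + γ = ∑ₖ (1 / (k + 1) - 1 / (x + k))` term by term.
-/

open Real MeasureTheory Filter Topology Set Asymptotics

local notation "γ" => Real.eulerMascheroniConstant

namespace Real

noncomputable def digamma (x : ℝ) : ℝ := deriv (fun y => log (Gamma y)) x

variable {x : ℝ}

lemma differentiableAt_Gamma_of_pos (hx : 0 < x) : DifferentiableAt ℝ Gamma x :=
  differentiableAt_Gamma fun m => ((neg_nonpos.mpr (Nat.cast_nonneg m)).trans_lt hx).ne'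

lemma digamma_eq_deriv_Gamma_div (hx : 0 < x) : digamma x = deriv Gamma x / Gamma x :=
  deriv.log (differentiableAt_Gamma_of_pos hx) (Gamma_pos_of_pos hx).ne'

lemma hasDerivAt_Gamma_digamma (hx : 0 < x) : HasDerivAt Gamma (Gamma x * digamma x) x := by
  rw [digamma_eq_deriv_Gamma_div hx, mul_div_cancel₀ _ (Gamma_pos_of_pos hx).ne']
  exact (differentiableAt_Gamma_of_pos hx).hasDerivAt

lemma digamma_add_one (hx : 0 < x) : digamma (x + 1) = digamma x + 1 / x := by
  have hlog : ∀ y : ℝ, 0 < y → log (Gamma (y + 1)) = log (Gamma y) + log y := fun y hy => by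
    rw [Gamma_add_one hy.ne', log_mul hy.ne' (Gamma_pos_of_pos hy).ne', add_comm]
  rw [digamma, ← deriv_comp_add_const, one_div, ← deriv_log, digamma,
    ← deriv_add ((differentiableAt_Gamma_of_pos hx).log (Gamma_pos_of_pos hx).ne')
      (differentiableAt_log hx.ne')]
  exact EventuallyEq.deriv_eq (eventually_gt_nhds hx |>.mono hlog)

lemma digamma_add_nat (hx : 0 < x) (n : ℕ) :
    digamma (x + n) = digamma x + ∑ k ∈ Finset.range n, 1 / (x + k) := by
  induction n with
  | zero => simp
  | succ n ih =>
    rw [Nat.cast_succ, ← add_assoc, digamma_add_one (by positivity), ih, Finset.sum_range_succ,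
      add_assoc]

lemma digamma_nat_add_one (n : ℕ) : digamma (n + 1) = -γ + harmonic n := by
  rw [digamma_eq_deriv_Gamma_div (by positivity), deriv_Gamma_nat, Gamma_nat_eq_factorial,
    mul_div_cancel_left₀ _ (by positivity)]

lemma digamma_one : digamma 1 = -γ := by
  simpa using digamma_nat_add_one 0

lemma monotoneOn_digamma : MonotoneOn digamma (Ioi 0) :=
  convexOn_log_Gamma.monotoneOn_deriv fun _ hx =>
    (differentiableAt_Gamma_of_pos hx).log (Gamma_pos_of_pos hx).ne'

lemma abs_digamma_add_nat_sub_le (hx : 0 < x) {m : ℕ} (hxm : x ≤ m) {n : ℕ} (hn : 0 < n) :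
    |digamma (x + n) - digamma (n + 1)| ≤ (m + 1) / n := by
  have hn' : (0 : ℝ) < n := by exact_mod_cast hn
  have hlow : digamma n ≤ digamma (x + n) :=
    monotoneOn_digamma hn' (by positivity : (0 : ℝ) < x + n) (by linarith)
  have hup : digamma (x + n) ≤ digamma (n + m) :=
    monotoneOn_digamma (by positivity : (0 : ℝ) < x + n) (by positivity : (0 : ℝ) < n + m)
      (by linarith)
  have hsum : ∑ k ∈ Finset.range m, 1 / ((n : ℝ) + k) ≤ m / n := by
    calc ∑ k ∈ Finset.range m, 1 / ((n : ℝ) + k) ≤ ∑ _k ∈ Finset.range m, 1 / (n : ℝ) :=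
          Finset.sum_le_sum fun k _ => one_div_le_one_div_of_le hn' (by simp)
      _ = m / n := by simp [div_eq_mul_inv]
  have hm : 0 ≤ (m : ℝ) / n := by positivity
  have h1 : 0 ≤ 1 / (n : ℝ) := by positivity
  rw [digamma_add_nat hn' m] at hup
  rw [digamma_add_one hn', abs_le, add_div]
  constructor <;> linarith

lemma hasSum_digamma_add_eulerMascheroni (hx : 0 < x) :
    HasSum (fun k : ℕ => 1 / (k + 1 : ℝ) - 1 / (x + k)) (digamma x + γ) := by
  have hpartial (n : ℕ) : ∑ k ∈ Finset.range n, (1 / (k + 1 : ℝ) - 1 / (x + k)) =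
      digamma x + γ + (digamma (n + 1) - digamma (x + n)) := by
    have hharmonic : (harmonic n : ℝ) = ∑ k ∈ Finset.range n, 1 / (k + 1 : ℝ) := by
      simp [harmonic, one_div]
    rw [Finset.sum_sub_distrib, digamma_add_nat hx, digamma_nat_add_one, ← hharmonic]
    ring
  have hsummable : Summable (fun k : ℕ => 1 / (k + 1 : ℝ) - 1 / (x + k)) := by
    refine Summable.of_norm_bounded_eventually_nat
      ((Real.summable_one_div_nat_pow.mpr one_lt_two).mul_left |x - 1|) ?_
    filter_upwards [eventually_ge_atTop 1] with k hk
    have hk' : (1 : ℝ) ≤ k := by exact_mod_cast hk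
    rw [show 1 / (k + 1 : ℝ) - 1 / (x + k) = (x - 1) / ((k + 1) * (x + k)) by
      field_simp; ring, norm_div, Real.norm_eq_abs, Real.norm_eq_abs,
      abs_of_pos (by positivity : (0 : ℝ) < (k + 1) * (x + k)), mul_one_div]
    gcongr
    nlinarith
  have hremainder : Tendsto (fun n : ℕ => digamma (n + 1) - digamma (x + n)) atTop (𝓝 0) := by
    obtain ⟨m, hxm⟩ := exists_nat_ge x
    refine squeeze_zero_norm' ?_ (tendsto_const_div_atTop_nhds_zero_nat ((m : ℝ) + 1))
    filter_upwards [eventually_gt_atTop 0] with n hn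
    rw [Real.norm_eq_abs, abs_sub_comm]
    exact abs_digamma_add_nat_sub_le hx hxm hn
  refine hsummable.hasSum_iff_tendsto_nat.mpr ?_
  simp_rw [hpartial]
  simpa using (tendsto_const_nhds (x := digamma x + γ)).add hremainder

lemma hasDerivAt_digamma (hx : 0 < x) :
    HasDerivAt digamma (∑' k : ℕ, 1 / (x + k) ^ 2) x := by
  have hbound : Summable (fun k : ℕ => 1 / (x / 2 + k) ^ 2) :=
    ((summable_one_div_nat_add_rpow (x / 2) 2).mpr one_lt_two).congr fun k => by
      rw [abs_of_pos (by positivity), rpow_two, add_comm]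
  have hterm (k : ℕ) (y : ℝ) (hy : y ∈ Ioi (x / 2)) :
      HasDerivAt (fun z => 1 / (k + 1 : ℝ) - 1 / (z + k)) (1 / (y + k) ^ 2) y := by
    have hyk : y + k ≠ 0 := by have : (0 : ℝ) < y := (half_pos hx).trans hy; positivity
    simpa [one_div, neg_div] using
      (((hasDerivAt_id y).add_const (k : ℝ)).inv hyk).const_sub (1 / (k + 1 : ℝ))
  have hterm_le (k : ℕ) (y : ℝ) (hy : y ∈ Ioi (x / 2)) :
      ‖1 / (y + k) ^ 2‖ ≤ 1 / (x / 2 + k) ^ 2 := by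
    have hy : x / 2 < y := hy
    rw [Real.norm_of_nonneg (by positivity)]
    gcongr
  have hmem : x ∈ Ioi (x / 2) := half_lt_self hx
  have htsum := hasDerivAt_tsum_of_isPreconnected hbound isOpen_Ioi isPreconnected_Ioi hterm
    hterm_le hmem (hasSum_digamma_add_eulerMascheroni hx).summable hmem
  have heq : (fun z => ∑' k : ℕ, (1 / (k + 1 : ℝ) - 1 / (z + k))) =ᶠ[𝓝 x]
      fun z => digamma z + γ := by
    filter_upwards [eventually_gt_nhds hx] with z hz
    exact (hasSum_digamma_add_eulerMascheroni hz).tsum_eq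
  simpa using (htsum.congr_of_eventuallyEq heq.symm).sub_const γ

lemma hasDerivAt_deriv_Gamma (hx : 0 < x) :
    HasDerivAt (deriv Gamma) (Gamma x * (digamma x ^ 2 + ∑' k : ℕ, 1 / (x + k) ^ 2)) x := by
  have heq : (fun y => Gamma y * digamma y) =ᶠ[𝓝 x] deriv Gamma := by
    filter_upwards [eventually_gt_nhds hx] with y hy
    exact (hasDerivAt_Gamma_digamma hy).deriv.symm
  refine (((hasDerivAt_Gamma_digamma hx).mul (hasDerivAt_digamma hx)).congr_of_eventuallyEq
    heq.symm).congr_deriv ?_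
  ring

lemma hasDerivAt_deriv_Gamma_one : HasDerivAt (deriv Gamma) (γ ^ 2 + π ^ 2 / 6) 1 := by
  have hzeta : ∑' k : ℕ, 1 / (1 + k : ℝ) ^ 2 = π ^ 2 / 6 := by
    simpa [add_comm] using ((hasSum_nat_add_iff' 1).mpr hasSum_zeta_two).tsum_eq
  have h := hasDerivAt_deriv_Gamma one_pos
  rwa [Gamma_one, digamma_one, hzeta, one_mul, neg_sq] at h

end Real

-- `ℂ`-valued so that the Mellin transform applies.
noncomputable def logPowMulExpNeg (k : ℕ) (t : ℝ) : ℂ := (log t ^ k * exp (-t) : ℝ)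

lemma log_smul_logPowMulExpNeg (k : ℕ) :
    (fun t : ℝ => log t • logPowMulExpNeg k t) = logPowMulExpNeg (k + 1) := by
  funext t
  rw [logPowMulExpNeg, logPowMulExpNeg, Complex.real_smul, ← Complex.ofReal_mul, pow_succ]
  ring_nf

lemma continuousOn_logPowMulExpNeg (k : ℕ) : ContinuousOn (logPowMulExpNeg k) (Ioi 0) :=
  Complex.continuous_ofReal.comp_continuousOn <|
    ((continuousOn_log.mono fun _ ht => ne_of_gt ht).pow k).mul (by fun_prop)

lemma logPowMulExpNeg_isBigO_atTop (k : ℕ) (a : ℝ) :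
    logPowMulExpNeg k =O[atTop] (· ^ (-a)) := by
  induction k generalizing a with
  | zero =>
    refine IsBigO.of_bound 1 ?_
    filter_upwards [(isLittleO_rpow_exp_atTop a).bound one_pos, eventually_gt_atTop 0]
      with t ht ht0
    rw [Real.norm_eq_abs, Real.norm_eq_abs, abs_of_pos (rpow_pos_of_pos ht0 a),
      abs_of_pos (exp_pos t), one_mul] at ht
    simp only [logPowMulExpNeg, pow_zero, one_mul, Complex.norm_real, norm_inv, Real.norm_eq_abs,
      exp_neg, rpow_neg ht0.le, abs_of_pos (exp_pos t), abs_of_pos (rpow_pos_of_pos ht0 a)]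
    exact inv_anti₀ (rpow_pos_of_pos ht0 _) ht
  | succ k ih =>
    rw [← log_smul_logPowMulExpNeg]
    exact isBigO_rpow_top_log_smul (lt_add_one a) (ih (a + 1))

lemma logPowMulExpNeg_isBigO_nhdsGT_zero (k : ℕ) {b : ℝ} (hb : 0 < b) :
    logPowMulExpNeg k =O[𝓝[>] 0] (· ^ (-b)) := by
  induction k generalizing b with
  | zero =>
    refine IsBigO.of_bound 1 ?_
    filter_upwards [Ioo_mem_nhdsGT one_pos] with t ⟨ht0, ht1⟩
    simp only [logPowMulExpNeg, pow_zero, one_mul, Complex.norm_real, Real.norm_eq_abs,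
      abs_of_pos (exp_pos _), abs_of_pos (rpow_pos_of_pos ht0 _)]
    calc exp (-t) ≤ 1 := exp_le_one_iff.mpr (by linarith)
      _ ≤ t ^ (-b) := one_le_rpow_of_pos_of_le_one_of_nonpos ht0 ht1.le (by linarith)
  | succ k ih =>
    rw [← log_smul_logPowMulExpNeg]
    exact isBigO_rpow_zero_log_smul (half_lt_self hb) (ih (half_pos hb))

lemma mellin_logPowMulExpNeg_hasDerivAt (k : ℕ) {s : ℂ} (hs : 0 < s.re) :
    MellinConvergent (logPowMulExpNeg (k + 1)) s ∧
      HasDerivAt (mellin (logPowMulExpNeg k)) (mellin (logPowMulExpNeg (k + 1)) s) s := by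
  rw [← log_smul_logPowMulExpNeg]
  exact mellin_hasDerivAt_of_isBigO_rpow
    ((continuousOn_logPowMulExpNeg k).locallyIntegrableOn measurableSet_Ioi)
    (logPowMulExpNeg_isBigO_atTop k _) (lt_add_one s.re)
    (logPowMulExpNeg_isBigO_nhdsGT_zero k (half_pos hs)) (half_lt_self hs)

lemma mellin_logPowMulExpNeg_zero {s : ℂ} (hs : 0 < s.re) :
    mellin (logPowMulExpNeg 0) s = Complex.Gamma s := by
  rw [Complex.Gamma_eq_integral hs, Complex.GammaIntegral_eq_mellin]
  congr 1
  ext t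
  simp [logPowMulExpNeg]

lemma iteratedDeriv_Gamma_eqOn_re_mellin (k : ℕ) :
    EqOn (iteratedDeriv k Gamma) (fun x : ℝ => (mellin (logPowMulExpNeg k) x).re) (Ioi 0) := by
  induction k with
  | zero =>
    intro x (hx : 0 < x)
    dsimp only
    rw [iteratedDeriv_zero, mellin_logPowMulExpNeg_zero (s := x) (by simpa using hx),
      Complex.Gamma_ofReal, Complex.ofReal_re]
  | succ k ih =>
    intro x (hx : 0 < x)
    rw [iteratedDeriv_succ]
    refine HasDerivAt.deriv ?_
    have h := (mellin_logPowMulExpNeg_hasDerivAt k (s := x) (by simpa using hx)).2.real_of_complex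
    exact h.congr_of_eventuallyEq (eventually_of_mem (Ioi_mem_nhds hx) ih)

lemma integrableOn_log_pow_mul_exp_neg (k : ℕ) :
    IntegrableOn (fun t => log t ^ k * exp (-t)) (Ioi 0) := by
  cases k with
  | zero => simpa using exp_neg_integrableOn_Ioi 0 one_pos
  | succ k =>
    have h := (mellin_logPowMulExpNeg_hasDerivAt k (s := 1) one_pos).1
    refine IntegrableOn.congr_fun h.re (fun t _ => ?_) measurableSet_Ioi
    simp only [logPowMulExpNeg, sub_self, Complex.cpow_zero, one_smul, RCLike.re_to_complex,
      Complex.ofReal_re]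

lemma integral_log_pow_mul_exp_neg (k : ℕ) :
    ∫ t in Ioi 0, log t ^ k * exp (-t) = iteratedDeriv k Gamma 1 := by
  rw [iteratedDeriv_Gamma_eqOn_re_mellin k (mem_Ioi.mpr one_pos)]
  simp only [mellin, Complex.ofReal_one, sub_self, Complex.cpow_zero, one_smul, logPowMulExpNeg]
  rw [integral_complex_ofReal, Complex.ofReal_re]

lemma integral_log_mul_exp_neg : ∫ t in Ioi 0, log t * exp (-t) = -γ := by
  simpa [hasDerivAt_Gamma_one.deriv] using integral_log_pow_mul_exp_neg 1

lemma integral_log_sq_mul_exp_neg : ∫ t in Ioi 0, log t ^ 2 * exp (-t) = γ ^ 2 + π ^ 2 / 6 := by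
  rw [integral_log_pow_mul_exp_neg, iteratedDeriv_succ, iteratedDeriv_one,
    Real.hasDerivAt_deriv_Gamma_one.deriv]

-- Each summand has the shape of `integrableOn_log_pow_mul_exp_neg`.
lemma log_sub_sq_mul_exp_neg_eq (c t : ℝ) : (log t - c) ^ 2 * exp (-t) =
    log t ^ 2 * exp (-t) - 2 * c * (log t ^ 1 * exp (-t)) + c ^ 2 * (log t ^ 0 * exp (-t)) := by
  ring

lemma integrableOn_log_sub_sq_mul_exp_neg (c : ℝ) :
    IntegrableOn (fun t => (log t - c) ^ 2 * exp (-t)) (Ioi 0) := by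
  simp_rw [log_sub_sq_mul_exp_neg_eq]
  exact ((integrableOn_log_pow_mul_exp_neg 2).sub
    ((integrableOn_log_pow_mul_exp_neg 1).const_mul _)).add
    ((integrableOn_log_pow_mul_exp_neg 0).const_mul _)

lemma integral_log_sub_sq_mul_exp_neg (c : ℝ) :
    ∫ t in Ioi 0, (log t - c) ^ 2 * exp (-t) = π ^ 2 / 6 + (γ + c) ^ 2 := by
  have h2 := integrableOn_log_pow_mul_exp_neg 2
  have h1 : IntegrableOn (fun t => 2 * c * (log t ^ 1 * exp (-t))) (Ioi 0) :=
    (integrableOn_log_pow_mul_exp_neg 1).const_mul _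
  have h0 : IntegrableOn (fun t => c ^ 2 * (log t ^ 0 * exp (-t))) (Ioi 0) :=
    (integrableOn_log_pow_mul_exp_neg 0).const_mul _
  have h21 : IntegrableOn (fun t => log t ^ 2 * exp (-t) - 2 * c * (log t ^ 1 * exp (-t)))
    (Ioi 0) := h2.sub h1
  simp_rw [log_sub_sq_mul_exp_neg_eq]
  rw [integral_add h21 h0, integral_sub h2 h1, integral_const_mul, integral_const_mul,
    integral_log_sq_mul_exp_neg]
  simp only [pow_one, pow_zero, one_mul, integral_log_mul_exp_neg, integral_exp_neg_Ioi_zero]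
  ring

lemma log_sq_mul_exp_neg_mul_eq {a t : ℝ} (ha : 0 < a) (ht : 0 < t) :
    log t ^ 2 * exp (-(a * t)) = (log (a * t) - log a) ^ 2 * exp (-(a * t)) := by
  rw [log_mul ha.ne' ht.ne', add_sub_cancel_left]

lemma integrableOn_log_sq_mul_exp_neg_mul {a : ℝ} (ha : 0 < a) :
    IntegrableOn (fun t => log t ^ 2 * exp (-(a * t))) (Ioi 0) := by
  have h := (integrableOn_Ioi_comp_mul_left_iff
    (fun u => (log u - log a) ^ 2 * exp (-u)) 0 ha).mpr
    (by simpa using integrableOn_log_sub_sq_mul_exp_neg (log a))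
  exact h.congr_fun (fun t ht => (log_sq_mul_exp_neg_mul_eq ha ht).symm) measurableSet_Ioi

lemma integral_log_sq_mul_exp_neg_mul {a : ℝ} (ha : 0 < a) :
    ∫ t in Ioi 0, log t ^ 2 * exp (-(a * t)) = (π ^ 2 / 6 + (γ + log a) ^ 2) / a := by
  rw [setIntegral_congr_fun measurableSet_Ioi fun t ht => log_sq_mul_exp_neg_mul_eq ha ht,
    integral_comp_mul_left_Ioi (fun u => (log u - log a) ^ 2 * exp (-u)) 0 ha, mul_zero,
    integral_log_sub_sq_mul_exp_neg, smul_eq_mul, inv_mul_eq_div]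

lemma image_one_sub_exp_neg_Ioi : (fun t : ℝ => 1 - exp (-t)) '' Ioi 0 = Ioo 0 1 := by
  ext z
  constructor
  · rintro ⟨t, ht, rfl⟩
    have : exp (-t) < 1 := exp_lt_one_iff.mpr (neg_lt_zero.mpr ht)
    exact ⟨by linarith, by linarith [exp_pos (-t)]⟩
  · rintro ⟨hz0, hz1⟩
    refine ⟨-log (1 - z), neg_pos.mpr (log_neg (by linarith) (by linarith)), ?_⟩
    show 1 - exp (-(-log (1 - z))) = z
    rw [neg_neg, exp_log (by linarith), sub_sub_cancel]

lemma integral_Ioo_zero_one_eq_integral_Ioi_one_sub_exp_neg {E : Type*} [NormedAddCommGroup E]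
    [NormedSpace ℝ E] (g : ℝ → E) :
    ∫ z in Ioo 0 1, g z = ∫ t in Ioi 0, exp (-t) • g (1 - exp (-t)) := by
  have hderiv (t : ℝ) (_ : t ∈ Ioi (0 : ℝ)) :
      HasDerivWithinAt (fun t => 1 - exp (-t)) (exp (-t)) (Ioi 0) t := by
    simpa using ((hasDerivAt_neg t).exp.const_sub 1).hasDerivWithinAt
  have hinj : InjOn (fun t : ℝ => 1 - exp (-t)) (Ioi 0) := fun a _ b _ hab =>
    neg_injective (exp_injective (sub_right_injective hab))
  rw [← image_one_sub_exp_neg_Ioi,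
    integral_image_eq_integral_abs_deriv_smul measurableSet_Ioi hderiv hinj]
  simp_rw [abs_of_pos (exp_pos _)]

lemma exp_neg_smul_log_neg_log_sq_mul_eq_sum (r m : ℕ) (t : ℝ) :
    exp (-t) • (log (-log (1 - (1 - exp (-t)))) ^ 2 *
      ((1 - exp (-t)) ^ r * (1 - (1 - exp (-t))) ^ m)) =
    ∑ j ∈ Finset.range (r + 1),
      (r.choose j : ℝ) * (-1) ^ j * (log t ^ 2 * exp (-((m + 1 + j) * t))) := by
  have hexp (j : ℕ) : exp (-((m + 1 + j) * t)) = exp (-t) ^ j * exp (-t) ^ m * exp (-t) := by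
    rw [← exp_nat_mul, ← exp_nat_mul, ← exp_add, ← exp_add]
    ring_nf
  rw [smul_eq_mul, sub_sub_cancel, log_exp, neg_neg, sub_eq_add_neg, add_comm, add_pow]
  simp_rw [hexp, Finset.sum_mul, Finset.mul_sum]
  refine Finset.sum_congr rfl fun j _ => ?_
  rw [neg_pow, one_pow]
  ring

lemma integral_log_neg_log_one_sub_sq_mul_pow (r m : ℕ) :
    ∫ z in Ioo 0 1, log (-log (1 - z)) ^ 2 * (z ^ r * (1 - z) ^ m) =
      ∑ j ∈ Finset.range (r + 1), (r.choose j : ℝ) * (-1) ^ j *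
        ((π ^ 2 / 6 + (γ + log (m + 1 + j)) ^ 2) / (m + 1 + j)) := by
  have hpos (j : ℕ) : (0 : ℝ) < m + 1 + j := by positivity
  rw [integral_Ioo_zero_one_eq_integral_Ioi_one_sub_exp_neg,
    setIntegral_congr_fun measurableSet_Ioi fun t _ => exp_neg_smul_log_neg_log_sq_mul_eq_sum r m t,
    integral_finsetSum _ fun j _ => (integrableOn_log_sq_mul_exp_neg_mul (hpos j)).const_mul _]
  refine Finset.sum_congr rfl fun j _ => ?_
  rw [integral_const_mul, integral_log_sq_mul_exp_neg_mul (hpos j)]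

/-- For `Z ~ Beta(r, n-r+1)` with `1 < r ≤ n`,
`E[(log(-log(1-Z)))²]` equals the stated finite sum. -/
theorem beta_loglog_sq_mean (n r : ℕ) (hr : 1 < r) (hrn : r ≤ n) :
    ∫ z in Set.Ioo (0 : ℝ) 1,
        (Real.log (-Real.log (1 - z))) ^ 2 *
          (z ^ (r - 1) * (1 - z) ^ (n - r) /
            (Real.Gamma r * Real.Gamma ((n : ℝ) - r + 1) / Real.Gamma ((n : ℝ) + 1))) =
      (1 / (Real.Gamma r * Real.Gamma ((n : ℝ) - r + 1) / Real.Gamma ((n : ℝ) + 1))) *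
        ∑ j ∈ Finset.range r, ((r - 1).choose j : ℝ) * (-1 : ℝ) ^ j *
          (1 / ((n : ℝ) - r + 1 + j)) *
          (Real.pi ^ 2 / 6 +
            (Real.eulerMascheroniConstant + Real.log ((n : ℝ) - r + 1 + j)) ^ 2) := by
  have hsum := integral_log_neg_log_one_sub_sq_mul_pow (r - 1) (n - r)
  rw [Nat.sub_add_cancel hr.le] at hsum
  have hcast (j : ℕ) : ((n - r : ℕ) : ℝ) + 1 + j = n - r + 1 + j := by
    rw [Nat.cast_sub hrn]
  simp_rw [← mul_div_assoc, integral_div, hsum, hcast, one_div_mul_eq_div]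
  congr 1
  refine Finset.sum_congr rfl fun j _ => ?_
  ring
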